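/- arXiv:1501.02497 — 5 statements merged into one kernel-verified Lean document; each statement's English description precedes it below -/
import Mathlib

section
/- Super-fast vanishing of the Hellinger distance under unbounded covariance parameters (Proposition 3.1): Let Θ ⊂ ℝ^{d₁}, let Ω = S_{d₂}^{++} be the set of ALL d₂×d₂ symmetric positive definite matrices (d₂ ≥ 1), and let {f(·|θ,Σ) : (θ,Σ) ∈ Θ×Ω} be any family of probability densities on X (measurable in x). Fix k₀ ≥ 1, G₀ ∈ E_{k₀}(Θ×Ω), and an integer k ≥ k₀+1. Then for every r ≥ 1 and every β > 0: lim_{ε→0⁺} inf{ exp(1/W_r(G,G₀)^β) · h(p_G, p_{G₀}) : G ∈ O_k(Θ×Ω), 0 < W_r(G,G₀) ≤ ε } = 0. -/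
open MeasureTheory Matrix

noncomputable section

attribute [local instance] Matrix.normedAddCommGroup Matrix.normedSpace

abbrev Vec (d : ℕ) := Fin d → ℝ
abbrev Mat (d : ℕ) := Matrix (Fin d) (Fin d) ℝ

/-- Euclidean norm on `Fin d → ℝ`. -/
def vnorm {d : ℕ} (v : Vec d) : ℝ := Real.sqrt (∑ i, v i ^ 2)

/-- Frobenius (entrywise ℓ²) norm on matrices. -/
def mnorm {d : ℕ} (A : Mat d) : ℝ := Real.sqrt (∑ i, ∑ j, A i j ^ 2)

/-- The ground distance ‖θ−θ'‖ + ‖Σ−Σ'‖ on the parameter space. -/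
def parDist {d₁ d₂ : ℕ} (p q : Vec d₁ × Mat d₂) : ℝ :=
  vnorm (p.1 - q.1) + mnorm (p.2 - q.2)

/-- A discrete mixing measure with exactly `k` distinct atoms in `P`,
with strictly positive weights summing to one. -/
structure Mix (P : Type*) (k : ℕ) where
  w : Fin k → ℝ
  atom : Fin k → P
  w_pos : ∀ i, 0 < w i
  w_sum : ∑ i, w i = 1
  atom_inj : Function.Injective atom

/-- The mixture density `p_G(x) = ∑ i p_i f(x|θ_i,Σ_i)`. -/
def Mix.density {P X : Type*} {k : ℕ} (f : P → X → ℝ) (G : Mix P k) (x : X) : ℝ :=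
  ∑ i, G.w i * f (G.atom i) x

/-- The `r`-th power Wasserstein transport cost between two mixing measures,
with ground distance `ρ`. -/
def WrPow {P : Type*} (ρ : P → P → ℝ) (r : ℝ) {k k' : ℕ}
    (G : Mix P k) (G' : Mix P k') : ℝ :=
  sInf { c : ℝ | ∃ q : Fin k → Fin k' → ℝ,
    (∀ i j, 0 ≤ q i j) ∧ (∀ i, ∑ j, q i j = G.w i) ∧ (∀ j, ∑ i, q i j = G'.w j) ∧
    c = ∑ i, ∑ j, q i j * ρ (G.atom i) (G'.atom j) ^ r }

/-- The `r`-th order Wasserstein distance between mixing measures. -/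
def Wr {P : Type*} (ρ : P → P → ℝ) (r : ℝ) {k k' : ℕ}
    (G : Mix P k) (G' : Mix P k') : ℝ :=
  WrPow ρ r G G' ^ (1 / r)

/-- The total variation distance between two densities on `X`. -/
def TV {d : ℕ} (X : Set (Vec d)) (p q : Vec d → ℝ) : ℝ :=
  (1 / 2) * ∫ x in X, |p x - q x|

/-- Directional derivative in the location parameter:  `βᵀ ∂f/∂θ (x|θ,Σ)`. -/
def dTheta {d d₁ d₂ : ℕ} (f : Vec d₁ × Mat d₂ → Vec d → ℝ)
    (p : Vec d₁ × Mat d₂) (β : Vec d₁) (x : Vec d) : ℝ :=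
  deriv (fun t : ℝ => f (p.1 + t • β, p.2) x) 0

/-- Directional derivative in the matrix parameter:  `tr((∂f/∂Σ (x|θ,Σ))ᵀ γ)`. -/
def dSigma {d d₁ d₂ : ℕ} (f : Vec d₁ × Mat d₂ → Vec d → ℝ)
    (p : Vec d₁ × Mat d₂) (γ : Mat d₂) (x : Vec d) : ℝ :=
  deriv (fun t : ℝ => f (p.1, p.2 + t • γ) x) 0


/-- The Hellinger distance between two densities on `X`. -/
def Hellinger {d : ℕ} (X : Set (Vec d)) (p q : Vec d → ℝ) : ℝ :=
  Real.sqrt ((1 / 2) * ∫ x in X, (Real.sqrt (p x) - Real.sqrt (q x)) ^ 2)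

/-!
Add to `G₀` one new atom `b` of small weight `m`, obtained from an atom of `G₀` by adding
`R • 1` to its covariance matrix. Since `S_{d₂}^{++}` is unbounded, `b` lies at distance between
`R / 2` and `(1 + √d₂) R` from every atom of `G₀`; with `m = (ε / ((1 + √d₂) R)) ^ r` this pins
`W_r(G, G₀)` in `[ε / (2 (1 + √d₂)), ε]` for every `R`, so the factor `exp (1 / W_r ^ β)` stays
bounded. The Hellinger distance, on the other hand, is at most `√m ≤ √(ε / R)` whatever the
densities are, because the two mixtures differ only by the mass `m`. Let `R → ∞`.
-/

open Set Filter

section Norms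

variable {d d₁ d₂ : ℕ}

lemma vnorm_nonneg (v : Vec d) : 0 ≤ vnorm v := Real.sqrt_nonneg _

lemma mnorm_nonneg (A : Mat d) : 0 ≤ mnorm A := Real.sqrt_nonneg _

lemma parDist_nonneg (p q : Vec d₁ × Mat d₂) : 0 ≤ parDist p q :=
  add_nonneg (vnorm_nonneg _) (mnorm_nonneg _)

lemma parDist_self (p : Vec d₁ × Mat d₂) : parDist p p = 0 := by
  simp [parDist, vnorm, mnorm]

lemma mnorm_eq_norm_toLp (A : Mat d) :
    mnorm A = ‖WithLp.toLp 2 (fun p : Fin d × Fin d => A p.1 p.2)‖ := by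
  rw [EuclideanSpace.norm_eq, mnorm, ← Finset.sum_product']
  simp [Real.norm_eq_abs, sq_abs]

lemma mnorm_add_le (A B : Mat d) : mnorm (A + B) ≤ mnorm A + mnorm B := by
  simp only [mnorm_eq_norm_toLp]
  calc _ = ‖WithLp.toLp 2 (fun p : Fin d × Fin d => A p.1 p.2) +
        WithLp.toLp 2 (fun p : Fin d × Fin d => B p.1 p.2)‖ := rfl
    _ ≤ _ := norm_add_le _ _

lemma mnorm_smul_one (R : ℝ) : mnorm (R • (1 : Mat d)) = √d * |R| := by
  have hrow : ∀ i : Fin d, ∑ j, (R • (1 : Mat d)) i j ^ 2 = R ^ 2 := fun i => by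
    simp [Matrix.one_apply, ite_pow]
  rw [mnorm, Finset.sum_congr rfl fun i _ => hrow i, Finset.sum_const, Finset.card_univ,
    Fintype.card_fin, nsmul_eq_mul, Real.sqrt_mul (Nat.cast_nonneg d), Real.sqrt_sq_eq_abs]

lemma abs_apply_le_mnorm (A : Mat d) (i j : Fin d) : |A i j| ≤ mnorm A := by
  rw [mnorm, ← Real.sqrt_sq_eq_abs]
  refine Real.sqrt_le_sqrt ?_
  calc A i j ^ 2 ≤ ∑ j', A i j' ^ 2 :=
        Finset.single_le_sum (f := fun j' => A i j' ^ 2) (fun _ _ => sq_nonneg _)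
          (Finset.mem_univ j)
    _ ≤ ∑ i', ∑ j', A i' j' ^ 2 :=
        Finset.single_le_sum (f := fun i' => ∑ j', A i' j' ^ 2)
          (fun _ _ => Finset.sum_nonneg fun _ _ => sq_nonneg _) (Finset.mem_univ i)

end Norms

namespace Mix

variable {P : Type*} {k : ℕ}

lemma pos (G : Mix P k) : 0 < k := by
  rcases Nat.eq_zero_or_pos k with rfl | hk
  · simpa using G.w_sum
  · exact hk

@[simps]
def consAtom (G : Mix P k) (b : P) (hb : b ∉ range G.atom) (m : ℝ) (hm : m ∈ Ioo 0 1) :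
    Mix P (k + 1) where
  w := Fin.cons m fun i => (1 - m) * G.w i
  atom := Fin.cons b G.atom
  w_pos := Fin.cases hm.1 fun i => mul_pos (sub_pos.2 hm.2) (G.w_pos i)
  w_sum := by rw [Fin.sum_cons, ← Finset.mul_sum, G.w_sum]; ring
  atom_inj := Fin.cons_injective_iff.2 ⟨hb, G.atom_inj⟩

lemma density_consAtom {X : Type*} (f : P → X → ℝ) (G : Mix P k) (b : P)
    (hb : b ∉ range G.atom) (m : ℝ) (hm : m ∈ Ioo 0 1) :
    (G.consAtom b hb m hm).density f = fun x => m * f b x + (1 - m) * G.density f x := by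
  funext x
  simp [density, consAtom, Fin.sum_univ_succ, Finset.mul_sum, mul_assoc]

lemma density_nonneg {X : Type*} {f : P → X → ℝ} (G : Mix P k)
    (hf : ∀ i x, 0 ≤ f (G.atom i) x) (x : X) : 0 ≤ G.density f x :=
  Finset.sum_nonneg fun i _ => mul_nonneg (G.w_pos i).le (hf i x)

lemma integral_density {X : Type*} [MeasurableSpace X] {μ : Measure X} {f : P → X → ℝ}
    (G : Mix P k) (hf : ∀ i, ∫ x, f (G.atom i) x ∂μ = 1) :
    ∫ x, G.density f x ∂μ = 1 := by
  have hint : ∀ i, Integrable (f (G.atom i)) μ := fun i =>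
    Integrable.of_integral_ne_zero ((hf i).symm ▸ one_ne_zero)
  simp only [density]
  rw [integral_finsetSum _ fun i _ => (hint i).const_mul _]
  simp_rw [integral_const_mul, hf, mul_one, G.w_sum]

end Mix

section ShiftCov

variable {d₁ d₂ : ℕ}

def shiftCov (p : Vec d₁ × Mat d₂) (R : ℝ) : Vec d₁ × Mat d₂ := (p.1, p.2 + R • 1)

lemma posDef_shiftCov {p : Vec d₁ × Mat d₂} (hp : p.2.PosDef) {R : ℝ} (hR : 0 ≤ R) :
    (shiftCov p R).2.PosDef :=
  hp.add_posSemidef (PosSemidef.one.smul hR)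

lemma parDist_shiftCov_le (p q : Vec d₁ × Mat d₂) {R : ℝ} (hR : 0 ≤ R) :
    parDist (shiftCov p R) q ≤ parDist p q + √d₂ * R := by
  have hsplit : p.2 + R • 1 - q.2 = (p.2 - q.2) + R • 1 := by abel
  have := mnorm_add_le (p.2 - q.2) (R • (1 : Mat d₂))
  rw [mnorm_smul_one, abs_of_nonneg hR] at this
  simp only [parDist, shiftCov, hsplit]
  linarith

lemma sub_parDist_le_parDist_shiftCov (hd₂ : 1 ≤ d₂) (p q : Vec d₁ × Mat d₂) (R : ℝ) :
    R - parDist p q ≤ parDist (shiftCov p R) q := by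
  let i : Fin d₂ := ⟨0, hd₂⟩
  have hentry : (p.2 + R • 1 - q.2) i i = (p.2 - q.2) i i + R := by
    simp only [Matrix.sub_apply, Matrix.add_apply, Matrix.smul_apply, Matrix.one_apply_eq]
    ring
  have hnew := abs_apply_le_mnorm (p.2 + R • 1 - q.2) i i
  have hold := abs_apply_le_mnorm (p.2 - q.2) i i
  rw [hentry] at hnew
  have := vnorm_nonneg (p.1 - q.1)
  simp only [parDist, shiftCov]
  linarith [le_abs_self ((p.2 - q.2) i i + R), neg_abs_le ((p.2 - q.2) i i)]

lemma parDist_shiftCov_mem_Icc (hd₂ : 1 ≤ d₂) {p q : Vec d₁ × Mat d₂} {R : ℝ}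
    (hR : 2 * parDist p q ≤ R) :
    parDist (shiftCov p R) q ∈ Icc (R / 2) ((1 + √d₂) * R) := by
  have := parDist_nonneg p q
  constructor
  · linarith [sub_parDist_le_parDist_shiftCov hd₂ p q R]
  · linarith [parDist_shiftCov_le p q (R := R) (by linarith)]

lemma eventually_exists_parDist_atom_mem_Icc (hd₂ : 1 ≤ d₂) {Θ : Set (Vec d₁)} {k : ℕ}
    (G₀ : Mix (Vec d₁ × Mat d₂) k)
    (hG₀ : ∀ i, G₀.atom i ∈ Θ ×ˢ {M : Mat d₂ | M.PosDef}) :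
    ∀ᶠ R in atTop, ∃ b ∈ Θ ×ˢ {M : Mat d₂ | M.PosDef},
      ∀ j, parDist b (G₀.atom j) ∈ Icc (R / 2) ((1 + √d₂) * R) := by
  let p₀ := G₀.atom ⟨0, G₀.pos⟩
  filter_upwards [eventually_ge_atTop (2 * ∑ j, parDist p₀ (G₀.atom j)),
    eventually_ge_atTop 0] with R hR hR0
  refine ⟨shiftCov p₀ R, ⟨(hG₀ _).1, posDef_shiftCov (hG₀ _).2 hR0⟩, fun j => ?_⟩
  have := Finset.single_le_sum (f := fun j => parDist p₀ (G₀.atom j))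
    (fun j _ => parDist_nonneg _ _) (Finset.mem_univ j)
  exact parDist_shiftCov_mem_Icc hd₂ (by linarith)

end ShiftCov


section Wasserstein

variable {P : Type*} {k k' : ℕ} (ρ : P → P → ℝ) (r : ℝ)

def IsCoupling (G : Mix P k) (G' : Mix P k') (q : Fin k → Fin k' → ℝ) : Prop :=
  (∀ i j, 0 ≤ q i j) ∧ (∀ i, ∑ j, q i j = G.w i) ∧ (∀ j, ∑ i, q i j = G'.w j)

def transportCost (G : Mix P k) (G' : Mix P k') (q : Fin k → Fin k' → ℝ) : ℝ :=
  ∑ i, ∑ j, q i j * ρ (G.atom i) (G'.atom j) ^ r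

lemma isCoupling_indep (G : Mix P k) (G' : Mix P k') :
    IsCoupling G G' fun i j => G.w i * G'.w j :=
  ⟨fun i j => mul_nonneg (G.w_pos i).le (G'.w_pos j).le,
    fun i => by rw [← Finset.mul_sum, G'.w_sum, mul_one],
    fun j => by rw [← Finset.sum_mul, G.w_sum, one_mul]⟩

variable {ρ r}

lemma WrPow_le_transportCost (hρ : ∀ p q, 0 ≤ ρ p q) {G : Mix P k} {G' : Mix P k'}
    {q : Fin k → Fin k' → ℝ} (hq : IsCoupling G G' q) :
    WrPow ρ r G G' ≤ transportCost ρ r G G' q := by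
  refine csInf_le ⟨0, ?_⟩ ⟨q, hq.1, hq.2.1, hq.2.2, rfl⟩
  rintro _ ⟨q', hq', -, -, rfl⟩
  exact Finset.sum_nonneg fun i _ => Finset.sum_nonneg fun j _ =>
    mul_nonneg (hq' i j) (Real.rpow_nonneg (hρ _ _) r)

lemma le_WrPow {G : Mix P k} {G' : Mix P k'} {c : ℝ}
    (h : ∀ q, IsCoupling G G' q → c ≤ transportCost ρ r G G' q) : c ≤ WrPow ρ r G G' := by
  have hindep := isCoupling_indep G G'
  refine le_csInf ⟨_, _, hindep.1, hindep.2.1, hindep.2.2, rfl⟩ ?_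
  rintro _ ⟨q, hq0, hrow, hcol, rfl⟩
  exact h q ⟨hq0, hrow, hcol⟩

namespace Mix

variable {G : Mix P k} {b : P} {hb : b ∉ range G.atom} {m : ℝ} {hm : m ∈ Ioo 0 1}

def consCoupling (G : Mix P k) (m : ℝ) : Fin (k + 1) → Fin k → ℝ :=
  Fin.cons (fun j => m * G.w j) fun i j => if i = j then (1 - m) * G.w i else 0

lemma isCoupling_consCoupling : IsCoupling (G.consAtom b hb m hm) G (G.consCoupling m) := by
  refine ⟨fun i j => ?_, fun i => ?_, fun j => ?_⟩
  · cases i using Fin.cases with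
    | zero => exact mul_nonneg hm.1.le (G.w_pos j).le
    | succ i =>
      simp only [consCoupling, Fin.cons_succ]
      split_ifs
      exacts [mul_nonneg (sub_pos.2 hm.2).le (G.w_pos i).le, le_rfl]
  · cases i using Fin.cases with
    | zero => simp [consCoupling, ← Finset.mul_sum, G.w_sum]
    | succ i => simp [consCoupling]
  · simp [consCoupling, Fin.sum_univ_succ]
    ring

lemma transportCost_consCoupling (hρ : ∀ p, ρ p p = 0) (hr : r ≠ 0) :
    transportCost ρ r (G.consAtom b hb m hm) G (G.consCoupling m) =
      m * ∑ j, G.w j * ρ b (G.atom j) ^ r := by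
  simp [transportCost, consCoupling, consAtom, Fin.sum_univ_succ, hρ, Real.zero_rpow hr,
    Finset.mul_sum, mul_assoc]

lemma WrPow_consAtom_le (hρ0 : ∀ p q, 0 ≤ ρ p q) (hρ : ∀ p, ρ p p = 0) (hr : 0 < r)
    {D : ℝ} (hD : ∀ j, ρ b (G.atom j) ≤ D) : WrPow ρ r (G.consAtom b hb m hm) G ≤ m * D ^ r := by
  refine (WrPow_le_transportCost hρ0 isCoupling_consCoupling).trans ?_
  rw [transportCost_consCoupling hρ hr.ne']
  refine mul_le_mul_of_nonneg_left ?_ hm.1.le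
  calc ∑ j, G.w j * ρ b (G.atom j) ^ r ≤ ∑ j, G.w j * D ^ r :=
        Finset.sum_le_sum fun j _ => mul_le_mul_of_nonneg_left
          (Real.rpow_le_rpow (hρ0 _ _) (hD j) hr.le) (G.w_pos j).le
    _ = D ^ r := by rw [← Finset.sum_mul, G.w_sum, one_mul]

/-- Whatever the coupling, the mass `m` of the new atom has to travel at least `L`. -/
lemma le_WrPow_consAtom (hρ0 : ∀ p q, 0 ≤ ρ p q) (hr : 0 ≤ r) {L : ℝ} (hL0 : 0 ≤ L)
    (hL : ∀ j, L ≤ ρ b (G.atom j)) : m * L ^ r ≤ WrPow ρ r (G.consAtom b hb m hm) G := by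
  refine le_WrPow fun q ⟨hq0, hrow, _⟩ => ?_
  have hmass : ∑ j, q 0 j = m := hrow 0
  calc m * L ^ r = ∑ j, q 0 j * L ^ r := by rw [← Finset.sum_mul, hmass]
    _ ≤ ∑ j, q 0 j * ρ b (G.atom j) ^ r :=
        Finset.sum_le_sum fun j _ => mul_le_mul_of_nonneg_left
          (Real.rpow_le_rpow hL0 (hL j) hr) (hq0 0 j)
    _ ≤ transportCost ρ r (G.consAtom b hb m hm) G q := by
        refine Finset.single_le_sum (f := fun i => ∑ j, q i j *
          ρ ((G.consAtom b hb m hm).atom i) (G.atom j) ^ r) (fun i _ => ?_) (Finset.mem_univ 0)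
        exact Finset.sum_nonneg fun j _ => mul_nonneg (hq0 i j) (Real.rpow_nonneg (hρ0 _ _) r)

lemma not_mem_range_atom_of_dist_pos (hρ : ∀ p, ρ p p = 0) (hpos : ∀ j, 0 < ρ b (G.atom j)) :
    b ∉ range G.atom := by
  rintro ⟨j, rfl⟩
  simpa [hρ] using hpos j

lemma Wr_consAtom_mem_Icc (hρ0 : ∀ p q, 0 ≤ ρ p q) (hρ : ∀ p, ρ p p = 0) (hr : 0 < r)
    {s L D : ℝ} (hs : 0 ≤ s) (hL0 : 0 ≤ L) (hρb : ∀ j, ρ b (G.atom j) ∈ Icc L D)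
    {hsr : s ^ r ∈ Ioo 0 1} :
    Wr ρ r (G.consAtom b hb (s ^ r) hsr) G ∈ Icc (s * L) (s * D) := by
  have hD0 : 0 ≤ D := hL0.trans ((hρb ⟨0, G.pos⟩).1.trans (hρb ⟨0, G.pos⟩).2)
  have hroot : ∀ x, 0 ≤ x → (s ^ r * x ^ r) ^ (1 / r) = s * x := fun x hx => by
    rw [← Real.mul_rpow hs hx, one_div, Real.rpow_rpow_inv (mul_nonneg hs hx) hr.ne']
  have hlow := le_WrPow_consAtom hρ0 hr.le hL0 (fun j => (hρb j).1) (hb := hb) (hm := hsr)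
  have hup := WrPow_consAtom_le hρ0 hρ hr (fun j => (hρb j).2) (hb := hb) (hm := hsr)
  have hpos : 0 ≤ s ^ r * L ^ r := by positivity
  constructor
  · rw [← hroot L hL0]
    exact Real.rpow_le_rpow hpos hlow (by positivity)
  · rw [← hroot D hD0]
    exact Real.rpow_le_rpow (hpos.trans hlow) hup (by positivity)

end Mix

end Wasserstein

section Hellinger

lemma sq_sqrt_sub_sqrt_le_abs_sub {p q : ℝ} (hp : 0 ≤ p) (hq : 0 ≤ q) :
    (√p - √q) ^ 2 ≤ |p - q| := by
  have hsp := Real.sq_sqrt hp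
  have hsq := Real.sq_sqrt hq
  rcases le_total q p with h | h
  · have := Real.sqrt_le_sqrt h
    rw [abs_of_nonneg (sub_nonneg.2 h)]
    nlinarith [Real.sqrt_nonneg q]
  · have := Real.sqrt_le_sqrt h
    rw [abs_of_nonpos (sub_nonpos.2 h)]
    nlinarith [Real.sqrt_nonneg p]

lemma hellinger_convex_combination_le {d : ℕ} {X : Set (Vec d)} {g q : Vec d → ℝ}
    (hg0 : ∀ x, 0 ≤ g x) (hg1 : ∫ x in X, g x = 1) (hq0 : ∀ x, 0 ≤ q x)
    (hq1 : ∫ x in X, q x = 1) {m : ℝ} (hm0 : 0 ≤ m) (hm1 : m ≤ 1) :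
    Hellinger X (fun x => m * g x + (1 - m) * q x) q ≤ √m := by
  have hint : IntegrableOn (fun x => m * (g x + q x)) X :=
    ((Integrable.of_integral_ne_zero (hg1 ▸ one_ne_zero)).add
      (Integrable.of_integral_ne_zero (hq1 ▸ one_ne_zero))).const_mul m
  have hpt : ∀ x, (√(m * g x + (1 - m) * q x) - √(q x)) ^ 2 ≤ m * (g x + q x) := fun x => by
    have hmix : 0 ≤ m * g x + (1 - m) * q x := by
      have := hg0 x; have := hq0 x; nlinarith
    calc (√(m * g x + (1 - m) * q x) - √(q x)) ^ 2 ≤ |m * g x + (1 - m) * q x - q x| :=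
          sq_sqrt_sub_sqrt_le_abs_sub hmix (hq0 x)
      _ = m * |g x - q x| := by
          rw [show m * g x + (1 - m) * q x - q x = m * (g x - q x) by ring, abs_mul,
            abs_of_nonneg hm0]
      _ ≤ m * (g x + q x) := by
          gcongr
          rw [abs_le]
          constructor <;> linarith [hg0 x, hq0 x]
  have hmass : ∫ x in X, m * (g x + q x) = 2 * m := by
    rw [integral_const_mul, integral_add (Integrable.of_integral_ne_zero (hg1 ▸ one_ne_zero))
      (Integrable.of_integral_ne_zero (hq1 ▸ one_ne_zero)), hg1, hq1]
    ring
  have hmono := integral_mono_of_nonneg (Eventually.of_forall fun x => sq_nonneg _) hint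
    (Eventually.of_forall hpt)
  rw [Hellinger]
  exact Real.sqrt_le_sqrt (by linarith)

lemma Mix.hellinger_density_consAtom_le {P : Type*} {k d : ℕ} {X : Set (Vec d)}
    {f : P → Vec d → ℝ} {G : Mix P k} {b : P} {hb : b ∉ range G.atom} {m : ℝ}
    {hm : m ∈ Ioo 0 1}
    (hf : ∀ p ∈ insert b (range G.atom), (∀ x, 0 ≤ f p x) ∧ ∫ x in X, f p x = 1) :
    Hellinger X ((G.consAtom b hb m hm).density f) (G.density f) ≤ √m := by
  have hfG : ∀ i, (∀ x, 0 ≤ f (G.atom i) x) ∧ ∫ x in X, f (G.atom i) x = 1 := fun i =>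
    hf _ (mem_insert_of_mem _ (mem_range_self i))
  rw [density_consAtom]
  exact hellinger_convex_combination_le (hf b (mem_insert b _)).1 (hf b (mem_insert b _)).2
    (G.density_nonneg fun i => (hfG i).1) (G.integral_density fun i => (hfG i).2) hm.1.le hm.2.le

end Hellinger

lemma exp_one_div_rpow_mul_lt {β w₀ W H s δ : ℝ} (hβ : 0 ≤ β) (hw₀ : 0 < w₀)
    (hW : w₀ ≤ W) (hH : H ≤ √s) (hs : s < (δ / Real.exp (1 / w₀ ^ β)) ^ 2) (hδ : 0 < δ) :
    Real.exp (1 / W ^ β) * H < δ := by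
  set E := Real.exp (1 / w₀ ^ β)
  have hE : 0 < E := Real.exp_pos _
  have hexp : Real.exp (1 / W ^ β) ≤ E := Real.exp_le_exp.2 <|
    one_div_le_one_div_of_le (Real.rpow_pos_of_pos hw₀ β) (Real.rpow_le_rpow hw₀.le hW hβ)
  have hsδ : √s < δ / E := (Real.sqrt_lt' (by positivity)).2 hs
  calc Real.exp (1 / W ^ β) * H ≤ Real.exp (1 / W ^ β) * √s :=
        mul_le_mul_of_nonneg_left hH (Real.exp_pos _).le
    _ ≤ E * √s := mul_le_mul_of_nonneg_right hexp (Real.sqrt_nonneg _)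
    _ < E * (δ / E) := by gcongr
    _ = δ := mul_div_cancel₀ δ hE.ne'

theorem hellinger_vanishes_superexponentially_unbounded_covariance_general
    {d d₁ d₂ : ℕ} (hd₂ : 1 ≤ d₂)
    (X : Set (Vec d)) (Θ : Set (Vec d₁))
    (f : Vec d₁ × Mat d₂ → Vec d → ℝ)
    (hf : ∀ p ∈ Θ ×ˢ {M : Mat d₂ | M.PosDef},
      Measurable (f p) ∧ (∀ x, 0 ≤ f p x) ∧ (∫ x in X, f p x) = 1)
    (k₀ : ℕ)
    (G₀ : Mix (Vec d₁ × Mat d₂) k₀)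
    (hG₀ : ∀ i, G₀.atom i ∈ Θ ×ˢ {M : Mat d₂ | M.PosDef})
    (k : ℕ) (hk : k₀ + 1 ≤ k) :
    ∀ r : ℝ, 1 ≤ r → ∀ β > (0 : ℝ), ∀ δ > (0 : ℝ), ∀ ε > (0 : ℝ),
      ∃ (k' : ℕ) (_ : k' ≤ k) (G : Mix (Vec d₁ × Mat d₂) k'),
        (∀ i, G.atom i ∈ Θ ×ˢ {M : Mat d₂ | M.PosDef}) ∧
        0 < Wr parDist r G G₀ ∧ Wr parDist r G G₀ ≤ ε ∧
        Real.exp (1 / Wr parDist r G G₀ ^ β) *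
            Hellinger X (Mix.density f G) (Mix.density f G₀) < δ := by
  intro r hr β hβ δ hδ ε hε
  let c := 1 + √d₂
  have hc : 1 ≤ c := le_add_of_nonneg_right (Real.sqrt_nonneg _)
  have hc0 : c ≠ 0 := (zero_lt_one.trans_le hc).ne'
  let E := Real.exp (1 / (ε / (2 * c)) ^ β)
  have hεR : ∀ᶠ R in atTop, ε / R < (δ / E) ^ 2 :=
    (tendsto_const_nhds.div_atTop tendsto_id).eventually (gt_mem_nhds (by positivity))
  obtain ⟨R, ⟨b, hbmem, hdist⟩, hRε, hRE⟩ :=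
    ((eventually_exists_parDist_atom_mem_Icc hd₂ G₀ hG₀).and
      ((eventually_gt_atTop ε).and hεR)).exists
  have hR : 0 < R := hε.trans hRε
  let s := ε / (c * R)
  have hs : 0 < s := by positivity
  have hsR : s * (c * R) = ε := by simp only [s]; field_simp
  have hsR2 : ε / (2 * c) = s * (R / 2) := by simp only [s]; field_simp
  have hs1 : s < 1 := (div_lt_one (by positivity)).2 (by nlinarith)
  have hsr : s ^ r ∈ Ioo 0 1 :=
    ⟨Real.rpow_pos_of_pos hs r, Real.rpow_lt_one hs.le hs1 (by linarith)⟩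
  have hb := Mix.not_mem_range_atom_of_dist_pos parDist_self fun j =>
    (half_pos hR).trans_le (hdist j).1
  have hmem : insert b (range G₀.atom) ⊆ Θ ×ˢ {M : Mat d₂ | M.PosDef} :=
    insert_subset hbmem (range_subset_iff.2 hG₀)
  let G := G₀.consAtom b hb (s ^ r) hsr
  have hW := Mix.Wr_consAtom_mem_Icc parDist_nonneg parDist_self (by linarith) hs.le
    (by positivity) hdist (hb := hb) (hsr := hsr)
  have hH : Hellinger X (G.density f) (G₀.density f) ≤ √s :=
    (Mix.hellinger_density_consAtom_le fun p hp => (hf p (hmem hp)).2).trans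
      (Real.sqrt_le_sqrt (Real.rpow_le_self_of_le_one hs.le hs1.le hr))
  refine ⟨k₀ + 1, hk, G, fun i => hmem ?_, lt_of_lt_of_le (by positivity) hW.1, ?_, ?_⟩
  · rw [← Fin.range_cons]
    exact mem_range_self i
  · exact hsR ▸ hW.2
  · refine exp_one_div_rpow_mul_lt hβ.le (by positivity) (hsR2 ▸ hW.1) hH ?_ hδ
    exact (div_le_div_of_nonneg_left hε.le hR (le_mul_of_one_le_left hR.le hc)).trans_lt hRE

/-- **Proposition 3.1** (super-fast vanishing of the Hellinger distance when the
covariance parameter ranges over all of `S_{d₂}^{++}`): for every `r ≥ 1` and `β > 0`,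
`lim_{ε→0} inf { exp(1/W_r(G,G₀)^β) h(p_G,p_{G₀}) : G ∈ O_k, 0 < W_r(G,G₀) ≤ ε } = 0`. -/
theorem hellinger_vanishes_superexponentially_unbounded_covariance
    {d d₁ d₂ : ℕ} (hd₂ : 1 ≤ d₂)
    (X : Set (Vec d)) (Θ : Set (Vec d₁))
    (f : Vec d₁ × Mat d₂ → Vec d → ℝ)
    (hf : ∀ p ∈ Θ ×ˢ {M : Mat d₂ | M.PosDef},
      Measurable (f p) ∧ (∀ x, 0 ≤ f p x) ∧ (∫ x in X, f p x) = 1)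
    (k₀ : ℕ) (hk₀ : 1 ≤ k₀)
    (G₀ : Mix (Vec d₁ × Mat d₂) k₀)
    (hG₀ : ∀ i, G₀.atom i ∈ Θ ×ˢ {M : Mat d₂ | M.PosDef})
    (k : ℕ) (hk : k₀ + 1 ≤ k) :
    ∀ r : ℝ, 1 ≤ r → ∀ β > (0 : ℝ), ∀ δ > (0 : ℝ), ∀ ε > (0 : ℝ),
      ∃ (k' : ℕ) (_ : k' ≤ k) (G : Mix (Vec d₁ × Mat d₂) k'),
        (∀ i, G.atom i ∈ Θ ×ˢ {M : Mat d₂ | M.PosDef}) ∧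
        0 < Wr parDist r G G₀ ∧ Wr parDist r G G₀ ≤ ε ∧
        Real.exp (1 / Wr parDist r G G₀ ^ β) *
            Hellinger X (Mix.density f G) (Mix.density f G₀) < δ :=
  hellinger_vanishes_superexponentially_unbounded_covariance_general hd₂ X Θ f hf k₀ G₀ hG₀ k hk
end
end

section
/- Second-order identifiability of the Weibull family (Theorem 3.3(c)): Let f(x|ν,λ) = (ν/λ)(x/λ)^{ν−1} exp(−(x/λ)^ν) for x > 0 (and 0 for x ≤ 0), with shape ν > 0 and scale λ > 0. Then the family {f(·|ν,λ) : ν > 0, λ > 0} is identifiable in the second order: for any k ≥ 1, any k distinct pairs (ν₁,λ₁),…,(ν_k,λ_k) ∈ (0,∞)², and any real coefficients α_j, β_j⁽¹⁾, β_j⁽²⁾, γ_j⁽¹¹⁾, γ_j⁽¹²⁾, γ_j⁽²²⁾ (1 ≤ j ≤ k), if Σ_{j=1}^k [α_j f + β_j⁽¹⁾ ∂f/∂ν + β_j⁽²⁾ ∂f/∂λ + γ_j⁽¹¹⁾ ∂²f/∂ν² + γ_j⁽¹²⁾ ∂²f/∂ν∂λ + γ_j⁽²²⁾ ∂²f/∂λ²]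 (x|ν_j,λ_j) = 0 for almost every x > 0, then all of these coefficients are zero. -/
open MeasureTheory

noncomputable section

/-- The Weibull density with shape `ν` and scale `λ`:
`f(x|ν,λ) = (ν/λ)(x/λ)^{ν−1} exp(−(x/λ)^ν)` for `x > 0`, and `0` otherwise. -/
def weibull (ν lam x : ℝ) : ℝ :=
  if 0 < x then (ν / lam) * (x / lam) ^ (ν - 1) * Real.exp (-((x / lam) ^ ν)) else 0

/-- First partial derivative of a two-parameter family in its first parameter. -/
def pd₁ (f : ℝ → ℝ → ℝ → ℝ) (a b x : ℝ) : ℝ := deriv (fun t => f t b x) a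

/-- First partial derivative in the second parameter. -/
def pd₂ (f : ℝ → ℝ → ℝ → ℝ) (a b x : ℝ) : ℝ := deriv (fun s => f a s x) b

/-- Second partial derivative in the first parameter. -/
def pd₁₁ (f : ℝ → ℝ → ℝ → ℝ) (a b x : ℝ) : ℝ := deriv (fun t => pd₁ f t b x) a

/-- Mixed second partial derivative. -/
def pd₁₂ (f : ℝ → ℝ → ℝ → ℝ) (a b x : ℝ) : ℝ := deriv (fun s => pd₁ f a s x) b

/-- Second partial derivative in the second parameter. -/
def pd₂₂ (f : ℝ → ℝ → ℝ → ℝ) (a b x : ℝ) : ℝ := deriv (fun s => pd₂ f a s x) b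

/-!
Write `x = exp y`, `L = y - log λ` and `A = exp (ν L) = (x / λ) ^ ν`. Every term of the
combination at `(ν, λ)` is then `exp (-y) * exp (-A) * P (A, L)`, with `P` a polynomial of degree
at most 3 in `A` and 2 in `L` whose coefficients determine `α, …, γ⁽²²⁾` triangularly.
As `y → ∞`, the factor `exp (-A)` of the parameter with the smallest `ν` (and, among those, the
largest `λ`) beats each of the others by a doubly exponential margin, while every `P` grows at
most exponentially. Hence that `P` decays faster than every exponential, which forces it to
vanish; removing it and inducting on the number of parameters shows that all the `P` vanish.
-/

open Real Filter Topology Polynomial Asymptotics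

theorem Polynomial.tendsto_eval_mul_exp_neg_mul_atTop (p : ℝ[X]) {b : ℝ} (hb : 0 < b) :
    Tendsto (fun z => p.eval z * exp (-b * z)) atTop (𝓝 0) := by
  have hpow : p.eval =O[atTop] (X ^ p.natDegree : ℝ[X]).eval := by
    refine isBigO_atTop_of_degree_le _ _ ?_
    rw [degree_X_pow]
    exact degree_le_natDegree
  have hexp : p.eval =o[atTop] fun z => exp (b * z) :=
    hpow.trans_isLittleO (by simpa using isLittleO_pow_exp_pos_mul_atTop p.natDegree hb)
  refine hexp.tendsto_div_nhds_zero.congr fun z => ?_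
  rw [neg_mul, exp_neg, div_eq_mul_inv]

def expPoly (ν : ℝ) (q : ℕ → ℝ[X]) (n : ℕ) (z : ℝ) : ℝ :=
  ∑ a ∈ Finset.range n, exp (ν * z) ^ a * (q a).eval z

theorem tendsto_exp_mul_expPoly {ν M : ℝ} {q : ℕ → ℝ[X]} {n : ℕ}
    (h : ∀ a < n, M + a * ν < 0) :
    Tendsto (fun z => exp (M * z) * expPoly ν q n z) atTop (𝓝 0) := by
  simp only [expPoly, Finset.mul_sum]
  rw [← Finset.sum_const_zero (s := Finset.range n)]
  refine tendsto_finsetSum _ fun a ha => ?_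
  have hlim := (q a).tendsto_eval_mul_exp_neg_mul_atTop
    (neg_pos.mpr (h a (Finset.mem_range.mp ha)))
  refine hlim.congr fun z => ?_
  rw [← exp_nat_mul, mul_left_comm, ← mul_assoc, ← exp_add]
  ring_nf

theorem eq_zero_of_forall_tendsto_exp_mul_expPoly {ν : ℝ} (hν : 0 < ν) {q : ℕ → ℝ[X]} {n : ℕ}
    (h : ∀ M, Tendsto (fun z => exp (M * z) * expPoly ν q n z) atTop (𝓝 0)) :
    ∀ a < n, q a = 0 := by
  induction n with
  | zero => simp
  | succ n ih =>
    have htop : Tendsto (fun z => (q n).eval z) atTop (𝓝 0) := by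
      have hlow := tendsto_exp_mul_expPoly (M := -(n * ν)) (ν := ν) (q := q) (n := n)
        fun a ha => by nlinarith [(Nat.cast_lt (α := ℝ)).mpr ha]
      have hdiff := (h (-(n * ν))).sub hlow
      rw [sub_zero] at hdiff
      refine hdiff.congr fun z => ?_
      rw [expPoly, Finset.sum_range_succ, ← expPoly, mul_add, add_sub_cancel_left, ← mul_assoc,
        ← exp_nat_mul, ← exp_add]
      ring_nf
      simp
    have hn : q n = 0 := by
      obtain ⟨hlead, -⟩ := ((q n).tendsto_nhds_iff).mp htop
      exact leadingCoeff_eq_zero.mp hlead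
    have hsucc : expPoly ν q (n + 1) = expPoly ν q n := by
      ext z
      simp [expPoly, Finset.sum_range_succ, hn]
    intro a ha
    rcases Nat.lt_succ_iff_lt_or_eq.mp ha with ha | rfl
    · exact ih (hsucc ▸ h) a ha
    · exact hn

theorem continuous_expPoly (ν : ℝ) (q : ℕ → ℝ[X]) (n : ℕ) : Continuous (expPoly ν q n) := by
  unfold expPoly
  fun_prop

theorem tendsto_exp_mul_comp_sub_iff {g : ℝ → ℝ} (M m : ℝ) :
    Tendsto (fun y => exp (M * y) * g (y - m)) atTop (𝓝 0) ↔
      Tendsto (fun z => exp (M * z) * g z) atTop (𝓝 0) := by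
  have hshift : (fun y => exp (M * y) * g (y - m))
      = fun y => exp (M * m) • (fun z => exp (M * z) * g z) (y - m) := by
    ext y
    rw [smul_eq_mul, ← mul_assoc, ← exp_add]
    ring_nf
  conv_lhs => rw [hshift, ← smul_zero (exp (M * m)), tendsto_const_smul_iff₀ (exp_ne_zero _)]
  conv_rhs => rw [← map_sub_atTop_eq m, tendsto_map'_iff]
  rfl

theorem exists_tendsto_exp_mul_expPoly_comp_sub {ν : ℝ} (hν : 0 < ν) (q : ℕ → ℝ[X]) (n : ℕ)
    (m : ℝ) : ∃ B, Tendsto (fun y => exp (B * y) * expPoly ν q n (y - m)) atTop (𝓝 0) :=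
  ⟨-(n * ν), (tendsto_exp_mul_comp_sub_iff _ m).mpr <| tendsto_exp_mul_expPoly fun a ha => by
    nlinarith [(Nat.cast_lt (α := ℝ)).mpr ha]⟩

theorem eq_zero_of_expPoly_comp_sub_eventuallyEq_zero {ν : ℝ} (hν : 0 < ν)
    {q : ℕ → ℝ[X]} {n : ℕ} {m : ℝ}
    (h : (fun y => expPoly ν q n (y - m)) =ᶠ[atTop] 0) : ∀ a < n, q a = 0 := by
  refine eq_zero_of_forall_tendsto_exp_mul_expPoly hν fun M => ?_
  refine (tendsto_exp_mul_comp_sub_iff M m).mp (tendsto_const_nhds.congr' ?_)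
  filter_upwards [h] with y hy
  simp [hy]

theorem expPoly_comp_sub_eventuallyEq_zero_of_forall_tendsto {ν : ℝ} (hν : 0 < ν)
    {q : ℕ → ℝ[X]} {n : ℕ} {m : ℝ}
    (h : ∀ M, Tendsto (fun y => exp (M * y) * expPoly ν q n (y - m)) atTop (𝓝 0)) :
    (fun y => expPoly ν q n (y - m)) =ᶠ[atTop] 0 := by
  have hq := eq_zero_of_forall_tendsto_exp_mul_expPoly hν fun M =>
    (tendsto_exp_mul_comp_sub_iff M m).mp (h M)
  refine Eventually.of_forall fun y => ?_
  simp only [Pi.zero_apply]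
  exact Finset.sum_eq_zero fun a ha => by simp [hq a (Finset.mem_range.mp ha)]

theorem tendsto_const_mul_exp_sub_mul_atTop {c q : ℝ} (hc : 0 < c) (hq : 0 < q) (B : ℝ) :
    Tendsto (fun y => c * exp (q * y) - B * y) atTop atTop := by
  have hratio : Tendsto (fun y => c * (exp (q * y) / y) - B) atTop atTop := by
    refine tendsto_atTop_add_const_right _ _ (Tendsto.const_mul_atTop hc ?_)
    simpa using tendsto_exp_mul_div_rpow_atTop 1 q hq
  refine (tendsto_id.atTop_mul_atTop₀ hratio).congr' ?_
  filter_upwards [eventually_gt_atTop 0] with y hy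
  simp only [id]
  field_simp

theorem exists_pos_mul_exp_le_exp_sub_exp {ν₁ ν₂ m₁ m₂ : ℝ} (hν₂ : 0 < ν₂)
    (h : ν₁ < ν₂ ∨ ν₁ = ν₂ ∧ m₂ < m₁) :
    ∃ c > 0, ∀ᶠ y in atTop, c * exp (ν₂ * y) ≤ exp (ν₂ * (y - m₂)) - exp (ν₁ * (y - m₁)) := by
  rcases h with hlt | ⟨rfl, hm⟩
  · refine ⟨exp (-(ν₂ * m₂)) / 2, by positivity, ?_⟩
    have hsmall : Tendsto (fun y => exp ((ν₁ - ν₂) * y - ν₁ * m₁)) atTop (𝓝 0) := by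
      refine tendsto_exp_atBot.comp (tendsto_atBot_add_const_right _ _ ?_)
      exact tendsto_id.const_mul_atTop_of_neg (sub_neg.mpr hlt)
    filter_upwards [hsmall.eventually_le_const (by positivity : 0 < exp (-(ν₂ * m₂)) / 2)]
      with y hy
    have h₁ : exp (ν₁ * (y - m₁)) = exp ((ν₁ - ν₂) * y - ν₁ * m₁) * exp (ν₂ * y) := by
      rw [← exp_add]; ring_nf
    have h₂ : exp (ν₂ * (y - m₂)) = exp (-(ν₂ * m₂)) * exp (ν₂ * y) := by
      rw [← exp_add]; ring_nf
    rw [h₁, h₂]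
    nlinarith [exp_pos (ν₂ * y)]
  · refine ⟨exp (-(ν₁ * m₂)) - exp (-(ν₁ * m₁)), sub_pos.mpr (exp_lt_exp.mpr (by nlinarith)),
      Eventually.of_forall fun y => le_of_eq ?_⟩
    simp only [sub_mul, ← exp_add]
    ring_nf

theorem tendsto_mul_add_exp_sub_exp_atBot {ν₁ ν₂ m₁ m₂ : ℝ} (hν₂ : 0 < ν₂)
    (h : ν₁ < ν₂ ∨ ν₁ = ν₂ ∧ m₂ < m₁) (B : ℝ) :
    Tendsto (fun y => B * y + (exp (ν₁ * (y - m₁)) - exp (ν₂ * (y - m₂)))) atTop atBot := by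
  obtain ⟨c, hc, hgap⟩ := exists_pos_mul_exp_le_exp_sub_exp hν₂ h
  refine tendsto_atBot_mono' _ ?_ (tendsto_neg_atTop_atBot.comp
    (tendsto_const_mul_exp_sub_mul_atTop hc hν₂ B))
  filter_upwards [hgap] with y hy
  simp only [Function.comp_apply]
  linarith

theorem tendsto_exp_mul_of_sum_exp_neg_exp_mul_eq_zero {ι : Type*} [DecidableEq ι]
    {s : Finset ι} {ν m : ι → ℝ} {f : ι → ℝ → ℝ} {i₀ : ι} (hi₀ : i₀ ∈ s)
    (hν : ∀ i ∈ s.erase i₀, 0 < ν i)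
    (hdom : ∀ i ∈ s.erase i₀, ν i₀ < ν i ∨ ν i₀ = ν i ∧ m i < m i₀)
    (hgrowth : ∀ i ∈ s.erase i₀, ∃ B, Tendsto (fun y => exp (B * y) * f i y) atTop (𝓝 0))
    (hsum : ∀ᶠ y in atTop, ∑ i ∈ s, exp (-exp (ν i * (y - m i))) * f i y = 0) (M : ℝ) :
    Tendsto (fun y => exp (M * y) * f i₀ y) atTop (𝓝 0) := by
  set A : ι → ℝ → ℝ := fun i y => exp (ν i * (y - m i)) with hA
  have hterm : ∀ i ∈ s.erase i₀,
      Tendsto (fun y => exp (M * y + (A i₀ y - A i y)) * f i y) atTop (𝓝 0) := by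
    intro i hi
    obtain ⟨B, hB⟩ := hgrowth i hi
    have hfactor := tendsto_exp_atBot.comp
      (tendsto_mul_add_exp_sub_exp_atBot (hν i hi) (hdom i hi) (M - B))
    have hprod := hfactor.mul hB
    rw [zero_mul] at hprod
    refine hprod.congr fun y => ?_
    simp only [Function.comp_apply, hA]
    rw [mul_left_comm, ← mul_assoc, ← exp_add]
    ring_nf
  have hlim := (tendsto_finsetSum _ hterm).neg
  simp only [Finset.sum_const_zero, neg_zero] at hlim
  refine hlim.congr' ?_
  filter_upwards [hsum] with y hy
  rw [← Finset.add_sum_erase _ _ hi₀, ← eq_neg_iff_add_eq_zero] at hy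
  calc -∑ i ∈ s.erase i₀, exp (M * y + (A i₀ y - A i y)) * f i y
      = exp (M * y) * exp (A i₀ y) * -∑ i ∈ s.erase i₀, exp (-A i y) * f i y := by
        simp only [mul_neg, Finset.mul_sum, sub_eq_add_neg, exp_add]
        ring_nf
    _ = exp (M * y) * f i₀ y := by
        rw [← hy, exp_neg]
        field_simp
        rfl

theorem eventuallyEq_zero_of_sum_exp_neg_exp_mul {ι : Type*} (s : Finset ι) {ν m : ι → ℝ}
    (hν : ∀ i ∈ s, 0 < ν i) (hinj : Set.InjOn (fun i => (ν i, m i)) s) {f : ι → ℝ → ℝ}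
    (hgrowth : ∀ i ∈ s, ∃ B, Tendsto (fun y => exp (B * y) * f i y) atTop (𝓝 0))
    (hrigid : ∀ i ∈ s,
      (∀ M, Tendsto (fun y => exp (M * y) * f i y) atTop (𝓝 0)) → f i =ᶠ[atTop] 0)
    (hsum : ∀ᶠ y in atTop, ∑ i ∈ s, exp (-exp (ν i * (y - m i))) * f i y = 0) :
    ∀ i ∈ s, f i =ᶠ[atTop] 0 := by
  classical
  induction s using Finset.strongInduction with
  | H s ih =>
    intro j hj
    -- the kernel of `i₀` decays slowest: smallest shape, and among those the largest location
    obtain ⟨i₀, hi₀, hmin⟩ := s.exists_min_image (fun i => toLex (ν i, -m i)) ⟨j, hj⟩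
    have hdom : ∀ i ∈ s.erase i₀, ν i₀ < ν i ∨ ν i₀ = ν i ∧ m i < m i₀ := by
      intro i hi
      obtain ⟨hne, his⟩ := Finset.mem_erase.mp hi
      have hlt : toLex (ν i₀, -m i₀) < toLex (ν i, -m i) := by
        refine lt_of_le_of_ne (hmin i his) fun heq => hne (hinj his hi₀ ?_)
        simp only [toLex_inj, Prod.mk.injEq, neg_inj] at heq
        simp [heq]
      simpa [Prod.Lex.toLex_lt_toLex] using hlt
    have hsub : ∀ i ∈ s.erase i₀, i ∈ s := fun i => Finset.mem_of_mem_erase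
    have hi₀zero := hrigid i₀ hi₀ (tendsto_exp_mul_of_sum_exp_neg_exp_mul_eq_zero hi₀
      (fun i hi => hν i (hsub i hi)) hdom (fun i hi => hgrowth i (hsub i hi)) hsum)
    by_cases hj₀ : j = i₀
    · exact hj₀ ▸ hi₀zero
    refine ih (s.erase i₀) (Finset.erase_ssubset hi₀) (fun i hi => hν i (hsub i hi))
      (hinj.mono (Finset.coe_subset.mpr (Finset.erase_subset _ _)))
      (fun i hi => hgrowth i (hsub i hi)) (fun i hi => hrigid i (hsub i hi)) ?_ j
      (Finset.mem_erase.mpr ⟨hj₀, hj⟩)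
    filter_upwards [hsum, hi₀zero] with y hy hy₀
    rwa [← Finset.add_sum_erase _ _ hi₀, hy₀, Pi.zero_apply, mul_zero, zero_add] at hy

/-- `(x / l) ^ ν` in `exp`/`log` form, which is smooth in `l` as well as in `ν`. -/
def ratioPow (ν l x : ℝ) : ℝ := exp (ν * (log x - log l))

section WeibullDerivatives

variable {ν l x : ℝ}

theorem weibull_eq_ratioPow (hx : 0 < x) (hl : 0 < l) :
    weibull ν l x = ν / x * ratioPow ν l x * exp (-ratioPow ν l x) := by
  have hxl : 0 < x / l := div_pos hx hl
  have hpow : (x / l) ^ ν = ratioPow ν l x := by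
    rw [ratioPow, ← log_div hx.ne' hl.ne', mul_comm, ← rpow_def_of_pos hxl]
  rw [weibull, if_pos hx, rpow_sub hxl, rpow_one, hpow]
  field_simp

theorem hasDerivAt_ratioPow_shape :
    HasDerivAt (fun t => ratioPow t l x) (ratioPow ν l x * (log x - log l)) ν := by
  simpa only [ratioPow, id, one_mul] using ((hasDerivAt_id ν).mul_const (log x - log l)).exp

theorem hasDerivAt_ratioPow_scale (hl : 0 < l) :
    HasDerivAt (fun s => ratioPow ν s x) (ratioPow ν l x * (ν * -l⁻¹)) l :=
  (((hasDerivAt_log hl.ne').const_sub (log x)).const_mul ν).exp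

theorem pd₁_weibull (hx : 0 < x) (hl : 0 < l) :
    pd₁ weibull ν l x = exp (-ratioPow ν l x) / x *
      (ratioPow ν l x + ν * (log x - log l) * (ratioPow ν l x - ratioPow ν l x ^ 2)) := by
  have hfun : (fun t => weibull t l x)
      = fun t => t / x * ratioPow t l x * exp (-ratioPow t l x) :=
    funext fun t => weibull_eq_ratioPow hx hl
  have hderiv : HasDerivAt (fun t => t / x * ratioPow t l x * exp (-ratioPow t l x)) _ ν :=
    (((hasDerivAt_id ν).div_const x).mul hasDerivAt_ratioPow_shape).mul
      hasDerivAt_ratioPow_shape.neg.exp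
  rw [pd₁, hfun, hderiv.deriv]
  simp only [Pi.mul_apply, Pi.neg_apply, id]
  field_simp
  ring

theorem pd₂_weibull (hx : 0 < x) (hl : 0 < l) :
    pd₂ weibull ν l x = ν ^ 2 / (l * x) * (ratioPow ν l x ^ 2 - ratioPow ν l x) *
      exp (-ratioPow ν l x) := by
  have hfun : (fun s => weibull ν s x)
      =ᶠ[𝓝 l] fun s => ν / x * ratioPow ν s x * exp (-ratioPow ν s x) := by
    filter_upwards [eventually_gt_nhds hl] with s hs using weibull_eq_ratioPow hx hs
  have hderiv : HasDerivAt (fun s => ν / x * ratioPow ν s x * exp (-ratioPow ν s x)) _ l :=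
    ((hasDerivAt_ratioPow_scale hl).const_mul (ν / x)).mul
      (hasDerivAt_ratioPow_scale hl).neg.exp
  rw [pd₂, hfun.deriv_eq, hderiv.deriv]
  simp only [Pi.neg_apply]
  field_simp
  ring

theorem pd₁₁_weibull (hx : 0 < x) (hl : 0 < l) :
    pd₁₁ weibull ν l x = exp (-ratioPow ν l x) / x *
      ((2 * ratioPow ν l x - 2 * ratioPow ν l x ^ 2) * (log x - log l)
        + ν * (ratioPow ν l x - 3 * ratioPow ν l x ^ 2 + ratioPow ν l x ^ 3)
          * (log x - log l) ^ 2) := by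
  have hfun : (fun t => pd₁ weibull t l x) = fun t => exp (-ratioPow t l x) / x *
      (ratioPow t l x + t * (log x - log l) * (ratioPow t l x - ratioPow t l x ^ 2)) :=
    funext fun t => pd₁_weibull hx hl
  have hA := hasDerivAt_ratioPow_shape (ν := ν) (l := l) (x := x)
  have hderiv : HasDerivAt (fun t => exp (-ratioPow t l x) / x *
      (ratioPow t l x + t * (log x - log l) * (ratioPow t l x - ratioPow t l x ^ 2))) _ ν :=
    (hA.neg.exp.div_const x).mul (hA.add (((hasDerivAt_id ν).mul_const _).mul
      (hA.sub (hA.pow 2))))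
  rw [pd₁₁, hfun, hderiv.deriv]
  simp only [Pi.neg_apply, id]
  field_simp
  ring

theorem pd₁₂_weibull (hx : 0 < x) (hl : 0 < l) :
    pd₁₂ weibull ν l x = ν * exp (-ratioPow ν l x) / (l * x) *
      (2 * ratioPow ν l x ^ 2 - 2 * ratioPow ν l x + ν * (log x - log l) *
        (3 * ratioPow ν l x ^ 2 - ratioPow ν l x - ratioPow ν l x ^ 3)) := by
  have hfun : (fun s => pd₁ weibull ν s x) =ᶠ[𝓝 l] fun s => exp (-ratioPow ν s x) / x *
      (ratioPow ν s x + ν * (log x - log s) * (ratioPow ν s x - ratioPow ν s x ^ 2)) := by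
    filter_upwards [eventually_gt_nhds hl] with s hs using pd₁_weibull hx hs
  have hA := hasDerivAt_ratioPow_scale (ν := ν) (x := x) hl
  have hL := ((hasDerivAt_log hl.ne').const_sub (log x)).const_mul ν
  have hderiv : HasDerivAt (fun s => exp (-ratioPow ν s x) / x *
      (ratioPow ν s x + ν * (log x - log s) * (ratioPow ν s x - ratioPow ν s x ^ 2))) _ l :=
    (hA.neg.exp.div_const x).mul (hA.add (hL.mul (hA.sub (hA.pow 2))))
  rw [pd₁₂, hfun.deriv_eq, hderiv.deriv]
  simp only [Pi.neg_apply]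
  field_simp
  ring

theorem pd₂₂_weibull (hx : 0 < x) (hl : 0 < l) :
    pd₂₂ weibull ν l x = ν ^ 2 * exp (-ratioPow ν l x) / (l ^ 2 * x) *
      (ratioPow ν l x - ratioPow ν l x ^ 2
        + ν * (ratioPow ν l x ^ 3 - 3 * ratioPow ν l x ^ 2 + ratioPow ν l x)) := by
  have hfun : (fun s => pd₂ weibull ν s x) =ᶠ[𝓝 l] fun s => ν ^ 2 * (s * x)⁻¹ *
      (ratioPow ν s x ^ 2 - ratioPow ν s x) * exp (-ratioPow ν s x) := by
    filter_upwards [eventually_gt_nhds hl] with s hs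
    rw [pd₂_weibull hx hs, div_eq_mul_inv]
  have hA := hasDerivAt_ratioPow_scale (ν := ν) (x := x) hl
  have hinv : HasDerivAt (fun s => (s * x)⁻¹) _ l :=
    ((hasDerivAt_id l).mul_const x).inv (by positivity)
  have hderiv : HasDerivAt (fun s => ν ^ 2 * (s * x)⁻¹ *
      (ratioPow ν s x ^ 2 - ratioPow ν s x) * exp (-ratioPow ν s x)) _ l :=
    ((hinv.const_mul (ν ^ 2)).mul ((hA.pow 2).sub hA)).mul hA.neg.exp
  rw [pd₂₂, hfun.deriv_eq, hderiv.deriv]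
  simp only [Pi.mul_apply, Pi.neg_apply, Pi.sub_apply, Pi.pow_apply, id]
  field_simp
  ring

end WeibullDerivatives

/-- The coefficient of `A ^ a`, a polynomial in `log (x / l)`, in the expansion of
`x * exp A * (α f + β₁ ∂_ν f + β₂ ∂_l f + γ₁₁ ∂²_ν f + γ₁₂ ∂_ν ∂_l f + γ₂₂ ∂²_l f)`,
where `f = weibull ν l x` and `A = (x / l) ^ ν`. -/
def weibullCoeffPoly (ν l α β₁ β₂ γ₁₁ γ₁₂ γ₂₂ : ℝ) : ℕ → ℝ[X]
  | 1 => C (α * ν + β₁ - β₂ * ν ^ 2 / l - 2 * γ₁₂ * ν / l + γ₂₂ * ν ^ 2 / l ^ 2 * (1 + ν))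
      + C (β₁ * ν + 2 * γ₁₁ - γ₁₂ * ν ^ 2 / l) * X + C (γ₁₁ * ν) * X ^ 2
  | 2 => C (β₂ * ν ^ 2 / l + 2 * γ₁₂ * ν / l - γ₂₂ * ν ^ 2 / l ^ 2 * (1 + 3 * ν))
      + C (-(β₁ * ν) - 2 * γ₁₁ + 3 * γ₁₂ * ν ^ 2 / l) * X + C (-(3 * γ₁₁ * ν)) * X ^ 2
  | 3 => C (γ₂₂ * ν ^ 3 / l ^ 2) + C (-(γ₁₂ * ν ^ 2 / l)) * X + C (γ₁₁ * ν) * X ^ 2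
  | _ => 0

theorem weibull_combination_eq {ν l x : ℝ} (hx : 0 < x) (hl : 0 < l)
    (α β₁ β₂ γ₁₁ γ₁₂ γ₂₂ : ℝ) :
    α * weibull ν l x + β₁ * pd₁ weibull ν l x + β₂ * pd₂ weibull ν l x
      + γ₁₁ * pd₁₁ weibull ν l x + γ₁₂ * pd₁₂ weibull ν l x + γ₂₂ * pd₂₂ weibull ν l x
    = exp (-exp (ν * (log x - log l))) *
        expPoly ν (weibullCoeffPoly ν l α β₁ β₂ γ₁₁ γ₁₂ γ₂₂) 4 (log x - log l) / x := by
  rw [weibull_eq_ratioPow hx hl, pd₁_weibull hx hl, pd₂_weibull hx hl, pd₁₁_weibull hx hl,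
    pd₁₂_weibull hx hl, pd₂₂_weibull hx hl]
  simp only [expPoly, Finset.sum_range_succ, Finset.sum_range_zero, weibullCoeffPoly, ratioPow,
    eval_add, eval_mul, eval_C, eval_X, eval_pow, eval_zero]
  field_simp
  ring

theorem Polynomial.coeffs_eq_zero_of_quadratic_eq_zero {a b c : ℝ}
    (h : C a + C b * X + C c * X ^ 2 = 0) : a = 0 ∧ b = 0 ∧ c = 0 :=
  ⟨by simpa using congrArg (coeff · 0) h, by simpa using congrArg (coeff · 1) h,
    by simpa using congrArg (coeff · 2) h⟩

theorem weibullCoeffPoly_eq_zero {ν l α β₁ β₂ γ₁₁ γ₁₂ γ₂₂ : ℝ} (hν : 0 < ν) (hl : 0 < l)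
    (h : ∀ a < 4, weibullCoeffPoly ν l α β₁ β₂ γ₁₁ γ₁₂ γ₂₂ a = 0) :
    α = 0 ∧ β₁ = 0 ∧ β₂ = 0 ∧ γ₁₁ = 0 ∧ γ₁₂ = 0 ∧ γ₂₂ = 0 := by
  obtain ⟨h₁₀, h₁₁, -⟩ := coeffs_eq_zero_of_quadratic_eq_zero (h 1 (by norm_num))
  obtain ⟨h₂₀, -, -⟩ := coeffs_eq_zero_of_quadratic_eq_zero (h 2 (by norm_num))
  obtain ⟨h₃₀, h₃₁, h₃₂⟩ := coeffs_eq_zero_of_quadratic_eq_zero (h 3 (by norm_num))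
  have hγ₂₂ : γ₂₂ = 0 := by simpa [hν.ne', hl.ne'] using h₃₀
  have hγ₁₂ : γ₁₂ = 0 := by simpa [hν.ne', hl.ne'] using h₃₁
  have hγ₁₁ : γ₁₁ = 0 := by simpa [hν.ne'] using h₃₂
  have hβ₁ : β₁ = 0 := by simpa [hγ₁₁, hγ₁₂, hν.ne'] using h₁₁
  have hβ₂ : β₂ = 0 := by simpa [hγ₁₂, hγ₂₂, hν.ne', hl.ne'] using h₂₀
  have hα : α = 0 := by simpa [hβ₁, hβ₂, hγ₁₂, hγ₂₂, hν.ne'] using h₁₀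
  exact ⟨hα, hβ₁, hβ₂, hγ₁₁, hγ₁₂, hγ₂₂⟩

theorem eq_zero_of_ae_restrict_Ioi_comp_log {G : ℝ → ℝ} (hG : Continuous G)
    (h : ∀ᵐ x ∂(volume.restrict (Set.Ioi 0)), G (log x) = 0) (y : ℝ) : G y = 0 := by
  have hcont : ContinuousOn (fun x => G (log x)) (Set.Ioi 0) :=
    hG.comp_continuousOn (continuousOn_log.mono fun x hx => (Set.mem_Ioi.mp hx).ne')
  have heq := Measure.eqOn_open_of_ae_eq h isOpen_Ioi hcont continuousOn_const
    (Set.mem_Ioi.mpr (exp_pos y))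
  simpa using heq

theorem weibull_second_order_identifiable_general
    (k : ℕ) (φ : Fin k → ℝ × ℝ)
    (hφ : ∀ j, 0 < (φ j).1 ∧ 0 < (φ j).2) (hinj : Function.Injective φ)
    (α β₁ β₂ γ₁₁ γ₁₂ γ₂₂ : Fin k → ℝ)
    (hae : ∀ᵐ x ∂(volume.restrict (Set.Ioi (0 : ℝ))),
      ∑ j, (α j * weibull (φ j).1 (φ j).2 x
        + β₁ j * pd₁ weibull (φ j).1 (φ j).2 x
        + β₂ j * pd₂ weibull (φ j).1 (φ j).2 x
        + γ₁₁ j * pd₁₁ weibull (φ j).1 (φ j).2 x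
        + γ₁₂ j * pd₁₂ weibull (φ j).1 (φ j).2 x
        + γ₂₂ j * pd₂₂ weibull (φ j).1 (φ j).2 x) = 0) :
    ∀ j, α j = 0 ∧ β₁ j = 0 ∧ β₂ j = 0 ∧ γ₁₁ j = 0 ∧ γ₁₂ j = 0 ∧ γ₂₂ j = 0 := by
  set q : Fin k → ℕ → ℝ[X] := fun j =>
    weibullCoeffPoly (φ j).1 (φ j).2 (α j) (β₁ j) (β₂ j) (γ₁₁ j) (γ₁₂ j) (γ₂₂ j)
  have hsum : ∀ y, ∑ j, exp (-exp ((φ j).1 * (y - log (φ j).2))) *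
      expPoly (φ j).1 (q j) 4 (y - log (φ j).2) = 0 := by
    refine eq_zero_of_ae_restrict_Ioi_comp_log ?_ ?_
    · have := fun j => continuous_expPoly (φ j).1 (q j) 4
      fun_prop
    filter_upwards [hae, ae_restrict_mem measurableSet_Ioi] with x hx hxpos
    simp only [weibull_combination_eq hxpos (hφ _).2, ← Finset.sum_div, div_eq_zero_iff] at hx
    exact hx.resolve_right (ne_of_gt hxpos)
  have hinj' : Set.InjOn (fun j => ((φ j).1, log (φ j).2)) (Finset.univ : Finset (Fin k)) :=
    fun i _ j _ hij => by
      obtain ⟨hν, hl⟩ := Prod.mk.inj hij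
      exact hinj (Prod.ext hν (log_injOn_pos (hφ i).2 (hφ j).2 hl))
  have hzero := eventuallyEq_zero_of_sum_exp_neg_exp_mul Finset.univ (fun j _ => (hφ j).1) hinj'
    (fun j _ => exists_tendsto_exp_mul_expPoly_comp_sub (hφ j).1 (q j) 4 _)
    (fun j _ => expPoly_comp_sub_eventuallyEq_zero_of_forall_tendsto (hφ j).1)
    (Eventually.of_forall hsum)
  exact fun j => weibullCoeffPoly_eq_zero (hφ j).1 (hφ j).2
    (eq_zero_of_expPoly_comp_sub_eventuallyEq_zero (hφ j).1 (hzero j (Finset.mem_univ j)))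

/-- **Theorem 3.3(c)**: the Weibull family (shape and scale both varying) is
identifiable in the second order: no nonzero linear combination of the densities
and their first- and second-order partial derivatives in the parameters, at
finitely many distinct parameter points, vanishes for almost every `x > 0`. -/
theorem weibull_second_order_identifiable
    (k : ℕ) (hk : 1 ≤ k) (φ : Fin k → ℝ × ℝ)
    (hφ : ∀ j, 0 < (φ j).1 ∧ 0 < (φ j).2) (hinj : Function.Injective φ)
    (α β₁ β₂ γ₁₁ γ₁₂ γ₂₂ : Fin k → ℝ)
    (hae : ∀ᵐ x ∂(volume.restrict (Set.Ioi (0 : ℝ))),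
      ∑ j, (α j * weibull (φ j).1 (φ j).2 x
        + β₁ j * pd₁ weibull (φ j).1 (φ j).2 x
        + β₂ j * pd₂ weibull (φ j).1 (φ j).2 x
        + γ₁₁ j * pd₁₁ weibull (φ j).1 (φ j).2 x
        + γ₁₂ j * pd₁₂ weibull (φ j).1 (φ j).2 x
        + γ₂₂ j * pd₂₂ weibull (φ j).1 (φ j).2 x) = 0) :
    ∀ j, α j = 0 ∧ β₁ j = 0 ∧ β₂ j = 0 ∧ γ₁₁ j = 0 ∧ γ₁₂ j = 0 ∧ γ₂₂ j = 0 :=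
  weibull_second_order_identifiable_general k φ hφ hinj α β₁ β₂ γ₁₁ γ₁₂ γ₂₂ hae
end
end

section
/- Solvability threshold of the Gaussian over-fitting polynomial system, one extra component (Proposition 4.2(i)): For m = 2, the system S_{2,3} admits a nontrivial real solution (for example c₁ = c₂ = 1, a₁ = 1, a₂ = −1, b₁ = b₂ = −1/2), while the system S_{2,4} admits no nontrivial real solution. Equivalently, the smallest r ≥ 1 for which S_{2,r} has no nontrivial real solution is r̄(2) = 4. -/
noncomputable section

/-- The system `S_{m,r}` of `r` polynomial equations in the unknowns
`(c_j, a_j, b_j)_{j=1}^m`: for each `α ∈ {1,…,r}`,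
`∑_j ∑_{n₁+2n₂=α} c_j² a_j^{n₁} b_j^{n₂}/(n₁! n₂!) = 0`. -/
def SsysEq (m r : ℕ) (c a b : Fin m → ℝ) : Prop :=
  ∀ α : ℕ, 1 ≤ α → α ≤ r →
    ∑ j : Fin m, ∑ n ∈ Finset.filter (fun n : ℕ × ℕ => n.1 + 2 * n.2 = α)
        (Finset.range (α + 1) ×ˢ Finset.range (α + 1)),
      c j ^ 2 * a j ^ n.1 * b j ^ n.2 / (n.1.factorial * n.2.factorial : ℝ) = 0

/-- The system `S_{m,r}` admits a nontrivial real solution: all `c_j ≠ 0`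
and at least one `a_j ≠ 0`. -/
def NontrivSol (m r : ℕ) : Prop :=
  ∃ c a b : Fin m → ℝ, SsysEq m r c a b ∧ (∀ j, c j ≠ 0) ∧ (∃ j, a j ≠ 0)

/-!
`α! · gaussCoeff a b α` is the `α`-th moment of a (formal) Gaussian with mean `a` and variance
`2 b`, so in terms of `u = a² + 2 b` the equations of `S_{2,4}` read, with `x = c₁²`, `y = c₂²`:
`x a₁ + y a₂ = 0`, `x u₁ + y u₂ = 0`, `Σ c_j² (3 a_j u_j - 2 a_j³) = 0` and
`Σ c_j² (3 u_j² - 2 a_j⁴) = 0`. The first two make `(a₂, u₂)` a negative multiple of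
`(a₁, u₁)`; the last two then give `a₁ (3 y u₁ - 2 a₁² (y - x)) = 0` and
`3 y² u₁² = 2 a₁⁴ (x² - x y + y²)`, which combine to `a₁⁶ (x² + x y + y²) = 0`,
so `a₁ = a₂ = 0`.
-/

open Finset

/-- The coefficient of `t ^ α` in `exp (a t + b t²)`. -/
def gaussCoeff (a b : ℝ) (α : ℕ) : ℝ :=
  ∑ n ∈ filter (fun n : ℕ × ℕ => n.1 + 2 * n.2 = α) (range (α + 1) ×ˢ range (α + 1)),
    a ^ n.1 * b ^ n.2 / (n.1.factorial * n.2.factorial : ℝ)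

theorem ssysEq_iff {m r : ℕ} {c a b : Fin m → ℝ} :
    SsysEq m r c a b ↔
      ∀ α, 1 ≤ α → α ≤ r → ∑ j, c j ^ 2 * gaussCoeff (a j) (b j) α = 0 := by
  simp only [SsysEq, gaussCoeff, mul_sum, mul_div_assoc, mul_assoc]

theorem SsysEq.mono {m r s : ℕ} {c a b : Fin m → ℝ} (h : SsysEq m s c a b) (hrs : r ≤ s) :
    SsysEq m r c a b :=
  fun α h1 hα => h α h1 (hα.trans hrs)

theorem NontrivSol.mono {m r s : ℕ} (h : NontrivSol m s) (hrs : r ≤ s) : NontrivSol m r :=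
  let ⟨c, a, b, hs, hc, ha⟩ := h
  ⟨c, a, b, hs.mono hrs, hc, ha⟩

section gaussCoeff

variable (a b : ℝ)

theorem gaussCoeff_one : gaussCoeff a b 1 = a := by
  rw [gaussCoeff, show filter (fun n : ℕ × ℕ => n.1 + 2 * n.2 = 1)
    (range (1 + 1) ×ˢ range (1 + 1)) = {(1, 0)} by decide]
  simp

theorem gaussCoeff_two : gaussCoeff a b 2 = a ^ 2 / 2 + b := by
  rw [gaussCoeff, show filter (fun n : ℕ × ℕ => n.1 + 2 * n.2 = 2)
    (range (2 + 1) ×ˢ range (2 + 1)) = {(2, 0), (0, 1)} by decide]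
  simp [Nat.factorial]

theorem gaussCoeff_three : gaussCoeff a b 3 = a ^ 3 / 6 + a * b := by
  rw [gaussCoeff, show filter (fun n : ℕ × ℕ => n.1 + 2 * n.2 = 3)
    (range (3 + 1) ×ˢ range (3 + 1)) = {(3, 0), (1, 1)} by decide]
  simp [Nat.factorial]

theorem gaussCoeff_four :
    gaussCoeff a b 4 = a ^ 4 / 24 + a ^ 2 * b / 2 + b ^ 2 / 2 := by
  rw [gaussCoeff, show filter (fun n : ℕ × ℕ => n.1 + 2 * n.2 = 4)
    (range (4 + 1) ×ˢ range (4 + 1)) = {(4, 0), (2, 1), (0, 2)} by decide]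
  simp [Nat.factorial]
  ring

end gaussCoeff

theorem eq_zero_of_two_point_system {x y a a' u u' : ℝ} (hx : 0 < x) (hy : 0 < y)
    (h1 : x * a + y * a' = 0) (h2 : x * u + y * u' = 0)
    (h3 : x * (3 * a * u - 2 * a ^ 3) + y * (3 * a' * u' - 2 * a' ^ 3) = 0)
    (h4 : x * (3 * u ^ 2 - 2 * a ^ 4) + y * (3 * u' ^ 2 - 2 * a' ^ 4) = 0) : a = 0 := by
  have hxy : x * (x + y) ≠ 0 := by positivity
  have h3' : a * (3 * y * u - 2 * a ^ 2 * (y - x)) = 0 := by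
    refine (mul_eq_zero.mp ?_).resolve_left hxy
    linear_combination y ^ 2 * h3 - 3 * y ^ 2 * a' * h2 + 3 * x * y * u * h1
      + 2 * (y ^ 2 * a' ^ 2 - x * y * a * a' + x ^ 2 * a ^ 2) * h1
  have h4' : 3 * y ^ 2 * u ^ 2 - 2 * a ^ 4 * (x ^ 2 - x * y + y ^ 2) = 0 := by
    refine (mul_eq_zero.mp ?_).resolve_left hxy
    linear_combination y ^ 3 * h4 - 3 * y ^ 2 * (y * u' - x * u) * h2
      + 2 * (y * a' - x * a) * (y ^ 2 * a' ^ 2 + x ^ 2 * a ^ 2) * h1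
  have h6 : a ^ 6 * (x ^ 2 + x * y + y ^ 2) = 0 := by
    linear_combination (-3 / 2 * a ^ 2) * h4'
      + (1 / 2) * (3 * a * y * u + 2 * a ^ 3 * (y - x)) * h3'
  exact pow_eq_zero_iff (n := 6) (by norm_num) |>.mp
    ((mul_eq_zero.mp h6).resolve_right (by positivity))

theorem not_nontrivSol_two_four : ¬ NontrivSol 2 4 := by
  rintro ⟨c, a, b, hs, hc, j, hj⟩
  have hx : 0 < c 0 ^ 2 := by positivity [hc 0]
  have hy : 0 < c 1 ^ 2 := by positivity [hc 1]
  have eqn (α : ℕ) (h1 : 1 ≤ α) (h4 : α ≤ 4) :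
      c 0 ^ 2 * gaussCoeff (a 0) (b 0) α + c 1 ^ 2 * gaussCoeff (a 1) (b 1) α = 0 := by
    simpa only [Fin.sum_univ_two] using ssysEq_iff.mp hs α h1 h4
  have e1 := eqn 1 le_rfl (by norm_num)
  have e2 := eqn 2 (by norm_num) (by norm_num)
  have e3 := eqn 3 (by norm_num) (by norm_num)
  have e4 := eqn 4 (by norm_num) le_rfl
  simp only [gaussCoeff_one, gaussCoeff_two, gaussCoeff_three, gaussCoeff_four] at e1 e2 e3 e4
  have ha0 : a 0 = 0 := eq_zero_of_two_point_system (u := a 0 ^ 2 + 2 * b 0)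
    (u' := a 1 ^ 2 + 2 * b 1) hx hy e1 (by linear_combination 2 * e2)
    (by linear_combination 6 * e3) (by linear_combination 24 * e4)
  have ha1 : a 1 = 0 := by simpa [ha0, hy.ne'] using e1
  fin_cases j <;> simp_all

theorem ssysEq_two_three_example :
    SsysEq 2 3 ![1, 1] ![1, -1] ![-(1 / 2), -(1 / 2)] := by
  rw [ssysEq_iff]
  intro α h1 h3
  interval_cases α <;>
    norm_num [gaussCoeff_one, gaussCoeff_two, gaussCoeff_three]

/-- **Proposition 4.2(i)**: for one extra component (`m = 2`), the system `S_{2,3}`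
has the nontrivial solution `c₁ = c₂ = 1, a₁ = 1, a₂ = −1, b₁ = b₂ = −1/2`, while
`S_{2,4}` has no nontrivial real solution; the solvability threshold is `r̄(2) = 4`. -/
theorem gaussian_system_threshold_one_extra :
    SsysEq 2 3 ![1, 1] ![1, -1] ![-(1 / 2), -(1 / 2)] ∧
    NontrivSol 2 3 ∧ ¬ NontrivSol 2 4 ∧
    IsLeast {r : ℕ | 1 ≤ r ∧ ¬ NontrivSol 2 r} 4 := by
  have hsol : NontrivSol 2 3 :=
    ⟨_, _, _, ssysEq_two_three_example, by simp [Fin.forall_fin_two], 0, by simp⟩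
  refine ⟨ssysEq_two_three_example, hsol, not_nontrivSol_two_four,
    ⟨by norm_num, not_nontrivSol_two_four⟩, fun r ⟨_, hr⟩ => ?_⟩
  by_contra! hlt
  exact hr (hsol.mono (by omega))
end
end

section
/- Lower bound on the solvability threshold with at least three extra components (Proposition 4.2(iii)): For every integer m ≥ 4, the system S_{m,6} admits a nontrivial real solution. Consequently, the smallest r ≥ 1 for which S_{m,r} has no nontrivial real solution satisfies r̄(m) ≥ 7 whenever m ≥ 4. -/
noncomputable section

/-- The inner sum of the system, for a single component. -/
def innerSum (α : ℕ) (c a b : ℝ) : ℝ :=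
  ∑ n ∈ Finset.filter (fun n : ℕ × ℕ => n.1 + 2 * n.2 = α)
      (Finset.range (α + 1) ×ˢ Finset.range (α + 1)),
    c ^ 2 * a ^ n.1 * b ^ n.2 / (n.1.factorial * n.2.factorial : ℝ)

lemma innerSum1 (c a b : ℝ) : innerSum 1 c a b = c^2*a := by
  unfold innerSum
  norm_num [Finset.sum_filter, Finset.sum_product, Finset.sum_range_succ, Nat.factorial]

lemma innerSum2 (c a b : ℝ) : innerSum 2 c a b = c^2*a^2/2 + c^2*b := by
  unfold innerSum
  norm_num [Finset.sum_filter, Finset.sum_product, Finset.sum_range_succ, Nat.factorial]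
  ring

lemma innerSum3 (c a b : ℝ) : innerSum 3 c a b = c^2*a^3/6 + c^2*a*b := by
  unfold innerSum
  norm_num [Finset.sum_filter, Finset.sum_product, Finset.sum_range_succ, Nat.factorial]
  ring

lemma innerSum4 (c a b : ℝ) :
    innerSum 4 c a b = c^2*a^4/24 + c^2*a^2*b/2 + c^2*b^2/2 := by
  unfold innerSum
  norm_num [Finset.sum_filter, Finset.sum_product, Finset.sum_range_succ, Nat.factorial]
  ring

lemma innerSum5 (c a b : ℝ) :
    innerSum 5 c a b = c^2*a^5/120 + c^2*a^3*b/6 + c^2*a*b^2/2 := by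
  unfold innerSum
  norm_num [Finset.sum_filter, Finset.sum_product, Finset.sum_range_succ, Nat.factorial]
  ring

lemma innerSum6 (c a b : ℝ) :
    innerSum 6 c a b = c^2*a^6/720 + c^2*a^4*b/24 + c^2*a^2*b^2/4 + c^2*b^3/6 := by
  unfold innerSum
  norm_num [Finset.sum_filter, Finset.sum_product, Finset.sum_range_succ, Nat.factorial]
  ring

lemma innerSum_zero (c : ℝ) (α : ℕ) (hα : 1 ≤ α) : innerSum α c 0 0 = 0 := by
  unfold innerSum
  apply Finset.sum_eq_zero
  intro n hn
  simp only [Finset.mem_filter] at hn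
  rcases Nat.eq_zero_or_pos n.1 with h1 | h1
  · rw [zero_pow (by omega : n.2 ≠ 0)]; ring
  · rw [zero_pow (by omega : n.1 ≠ 0)]; ring

/-- Sum over `Fin m` of a function vanishing for indices `≥ 4`. -/
lemma sum_first_four {m : ℕ} (hm : 4 ≤ m) (G : Fin m → ℝ)
    (h : ∀ j : Fin m, 4 ≤ (j : ℕ) → G j = 0) :
    ∑ j : Fin m, G j =
      G ⟨0, by omega⟩ + G ⟨1, by omega⟩ + G ⟨2, by omega⟩ + G ⟨3, by omega⟩ := by
  classical
  have hsub : ({⟨0, by omega⟩, ⟨1, by omega⟩, ⟨2, by omega⟩, ⟨3, by omega⟩} :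
      Finset (Fin m)) ⊆ Finset.univ := Finset.subset_univ _
  rw [← Finset.sum_subset hsub]
  · rw [Finset.sum_insert (by simp [Fin.ext_iff]),
      Finset.sum_insert (by simp [Fin.ext_iff]),
      Finset.sum_insert (by simp [Fin.ext_iff]), Finset.sum_singleton]
    ring
  · intro x _ hx
    apply h
    simp only [Finset.mem_insert, Finset.mem_singleton, Fin.ext_iff] at hx
    push_neg at hx
    omega

/-- **Proposition 4.2(iii)**: for every `m ≥ 4` the system `S_{m,6}` admits a
nontrivial real solution; consequently the solvability threshold satisfies
`r̄(m) ≥ 7`. -/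
theorem gaussian_system_threshold_at_least_seven (m : ℕ) (hm : 4 ≤ m) :
    NontrivSol m 6 ∧ ∀ r : ℕ, 1 ≤ r → ¬ NontrivSol m r → 7 ≤ r := by
  have key : NontrivSol m 6 := by
    set gv : ℝ := Real.sqrt 6 with hgv
    have hg : gv ^ 2 = 6 := Real.sq_sqrt (by norm_num)
    have hgpos : 0 < gv := Real.sqrt_pos.mpr (by norm_num)
    have hglt : gv < 3 := by nlinarith
    have hApos : (0:ℝ) < 6/5 + 7*gv/10 := by positivity
    set av : ℝ := Real.sqrt (6/5 + 7*gv/10) with hav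
    have ha : av ^ 2 = 6/5 + 7*gv/10 := Real.sq_sqrt hApos.le
    have havne : av ≠ 0 := by
      have := Real.sqrt_pos.mpr hApos; rw [← hav] at this; linarith
    have hwpos : (0:ℝ) < (73 - 28*gv)/25 := by nlinarith
    set sv : ℝ := Real.sqrt ((73 - 28*gv)/25) with hsv
    have hs : sv ^ 2 = (73 - 28*gv)/25 := Real.sq_sqrt hwpos.le
    have hsne : sv ≠ 0 := by
      have := Real.sqrt_pos.mpr hwpos; rw [← hsv] at this; linarith
    refine ⟨fun j => if (j:ℕ) = 2 ∨ (j:ℕ) = 3 then sv else 1,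
      fun j => if (j:ℕ) = 0 ∨ (j:ℕ) = 2 then av
        else if (j:ℕ) = 1 ∨ (j:ℕ) = 3 then -av else 0,
      fun j => if (j:ℕ) ≤ 1 then (-1/10 - 7*gv/20 : ℝ)
        else if (j:ℕ) ≤ 3 then (-103/50 - 91*gv/100 : ℝ) else 0, ?_, ?_, ?_⟩
    · have goal : ∀ α : ℕ, 1 ≤ α → α ≤ 6 →
        ∑ j : Fin m, innerSum α
          (if (j:ℕ) = 2 ∨ (j:ℕ) = 3 then sv else 1)
          (if (j:ℕ) = 0 ∨ (j:ℕ) = 2 then av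
            else if (j:ℕ) = 1 ∨ (j:ℕ) = 3 then -av else 0)
          (if (j:ℕ) ≤ 1 then (-1/10 - 7*gv/20 : ℝ)
            else if (j:ℕ) ≤ 3 then (-103/50 - 91*gv/100 : ℝ) else 0) = 0 := by
        intro α h1 h6
        rw [sum_first_four hm _ ?_]
        · norm_num
          interval_cases α
          · rw [innerSum1, innerSum1, innerSum1, innerSum1]; ring
          · rw [innerSum2, innerSum2, innerSum2, innerSum2]
            linear_combination ((1 : ℝ) + (1 : ℝ)*sv^2) * ha + ((-73/25 : ℝ) + (-28/25 : ℝ)*gv) * hs + ((784/625 : ℝ)) * hg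
          · rw [innerSum3, innerSum3, innerSum3, innerSum3]; ring
          · rw [innerSum4, innerSum4, innerSum4, innerSum4]
            linear_combination ((-7/24 : ℝ)*gv + (-49/25 : ℝ)*sv^2 + (-511/600 : ℝ)*sv^2*gv + (1/12 : ℝ)*av^2 + (1/12 : ℝ)*av^2*sv^2) * ha + ((4729/2500 : ℝ) + (847/625 : ℝ)*gv + (3479/15000 : ℝ)*gv^2) * hs + ((-172921/187500 : ℝ) + (-24353/93750 : ℝ)*gv) * hg
          · rw [innerSum5, innerSum5, innerSum5, innerSum5]; ring
          · rw [innerSum6, innerSum6, innerSum6, innerSum6]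
            linear_combination ((-1/1000 : ℝ) + (-7/6000 : ℝ)*gv + (1519/36000 : ℝ)*gv^2 + (9599/5000 : ℝ)*sv^2 + (16681/10000 : ℝ)*sv^2*gv + (65219/180000 : ℝ)*sv^2*gv^2 + (-1/200 : ℝ)*av^2 + (-49/1800 : ℝ)*av^2*gv + (-101/600 : ℝ)*av^2*sv^2 + (-133/1800 : ℝ)*av^2*sv^2*gv + (1/360 : ℝ)*av^4 + (1/360 : ℝ)*av^4*sv^2) * ha + ((-228817/375000 : ℝ) + (-8064/15625 : ℝ)*gv + (-77567/750000 : ℝ)*gv^2 + (343/140625 : ℝ)*gv^3) * hs + ((348292/1171875 : ℝ) + (971719/7031250 : ℝ)*gv + (-9604/3515625 : ℝ)*gv^2) * hg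
        · intro j hj
          have h2 : ¬((j:ℕ) = 2 ∨ (j:ℕ) = 3) := by omega
          have h0 : ¬((j:ℕ) = 0 ∨ (j:ℕ) = 2) := by omega
          have h13 : ¬((j:ℕ) = 1 ∨ (j:ℕ) = 3) := by omega
          have hb : ¬((j:ℕ) ≤ 1) := by omega
          have hb' : ¬((j:ℕ) ≤ 3) := by omega
          rw [if_neg h2, if_neg h0, if_neg h13, if_neg hb, if_neg hb']
          exact innerSum_zero 1 α h1
      exact goal
    · intro j
      by_cases h : (j:ℕ) = 2 ∨ (j:ℕ) = 3 <;> simp [h, hsne]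
    · exact ⟨⟨0, by omega⟩, by simp [havne]⟩
  refine ⟨key, ?_⟩
  intro r hr hno
  by_contra hlt
  push_neg at hlt
  have hr6 : r ≤ 6 := by omega
  obtain ⟨c, a, b, hsol, hc, ha⟩ := key
  exact hno ⟨c, a, b, fun α h1 h2 => hsol α h1 (h2.trans hr6), hc, ha⟩

end
end

section
/- Key Gamma identity and failure of first-order identifiability (Proposition 5.1): For the Gamma density f(x|a,b) = (b^a/Γ(a)) x^{a−1} e^{−bx} for x > 0 (and f = 0 for x ≤ 0), with shape a > 0 and rate b > 0, the identity ∂f/∂b(x|a,b) = (a/b)·f(x|a,b) − (a/b)·f(x|a+1,b) holds for every x > 0. Consequently, the Gamma family is not identifiable in the first order: for any a > 1 and b > 0, the two distinct parameter pairs (a,b) and (a−1,b) admit real coefficients, not all zero — namely β₁ = β₂ = γ₁ = 0, any γ₂ ≠ 0, α₁ = γ₂(a−1)/b, α₂ = −γ₂(a−1)/b — such that α₁ f(x|a,b) + β₁ ∂f/∂a(x|a,b) + γ₁ ∂f/∂b(x|a,b) + α₂ f(x|a−1,b) + β₂ ∂f/∂a(x|a−1,b) + γ₂ ∂f/∂b(x|a−1,b)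 = 0 for every x > 0. -/
open MeasureTheory

noncomputable section

/-- The Gamma density with shape `a` and rate `b`:
`f(x|a,b) = (b^a/Γ(a)) x^{a−1} e^{−bx}` for `x > 0`, and `0` otherwise. -/
def gammaDensity (a b x : ℝ) : ℝ :=
  if 0 < x then b ^ a / Real.Gamma a * x ^ (a - 1) * Real.exp (-(b * x)) else 0

/-- First-order identifiability (the linear-independence condition) for the Gamma
family on the parameter domain `(0,∞)²`, with respect to Lebesgue measure on
`(0,∞)`. -/
def GammaFirstOrderIdent : Prop :=
  ∀ (k : ℕ) (φ : Fin k → ℝ × ℝ), (∀ i, 0 < (φ i).1 ∧ 0 < (φ i).2) →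
    Function.Injective φ →
    ∀ α β γ : Fin k → ℝ,
      (∀ᵐ x ∂(volume.restrict (Set.Ioi (0 : ℝ))),
        ∑ i, (α i * gammaDensity (φ i).1 (φ i).2 x
          + β i * deriv (fun s => gammaDensity s (φ i).2 x) (φ i).1
          + γ i * deriv (fun s => gammaDensity (φ i).1 s x) (φ i).2) = 0) →
      ∀ i, α i = 0 ∧ β i = 0 ∧ γ i = 0

/-! The rate derivative of the Gamma density is `(a/b - x) f(x|a,b)`, and the factor `x` shifts
the shape: `x f(x|a,b) = (a/b) f(x|a+1,b)` because `Γ(a+1) = a Γ(a)`. Hence `∂f/∂b(·|a-1,b)` is a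
combination of `f(·|a-1,b)` and `f(·|a,b)`, a nontrivial linear relation between two distinct
parameter pairs. -/

theorem mul_gammaDensity_add_one {a b : ℝ} (ha : a ≠ 0) (hb : b ≠ 0) (x : ℝ) :
    a * gammaDensity (a + 1) b x = b * x * gammaDensity a b x := by
  unfold gammaDensity
  split_ifs with hx
  · rw [Real.Gamma_add_one ha, Real.rpow_add_one hb, add_sub_cancel_right,
      ← sub_add_cancel a 1, Real.rpow_add_one hx.ne', sub_add_cancel]
    -- at a pole of `Γ` both sides are `0`, by the convention `x / 0 = 0`
    by_cases hΓ : Real.Gamma a = 0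
    · simp [hΓ]
    field_simp
  · simp

theorem hasDerivAt_gammaDensity_rate (a : ℝ) {b x : ℝ} (hb : b ≠ 0) (hx : 0 < x) :
    HasDerivAt (fun s => gammaDensity a s x) ((a / b - x) * gammaDensity a b x) b := by
  simp only [gammaDensity, if_pos hx]
  have hpow : HasDerivAt (fun s : ℝ => s ^ a) (a / b * b ^ a) b := by
    convert Real.hasDerivAt_rpow_const (p := a) (Or.inl hb) using 1
    rw [Real.rpow_sub_one hb]
    ring
  have hexp : HasDerivAt (fun s : ℝ => Real.exp (-(s * x))) (-x * Real.exp (-(b * x))) b := by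
    simpa [mul_comm x] using ((hasDerivAt_id b).mul_const x).neg.exp
  exact (((hpow.div_const (Real.Gamma a)).mul_const (x ^ (a - 1))).mul hexp).congr_deriv
    (by ring)

theorem deriv_gammaDensity_rate {a b x : ℝ} (ha : a ≠ 0) (hb : b ≠ 0) (hx : 0 < x) :
    deriv (fun s => gammaDensity a s x) b
      = a / b * gammaDensity a b x - a / b * gammaDensity (a + 1) b x := by
  rw [(hasDerivAt_gammaDensity_rate a hb hx).deriv]
  field_simp
  linear_combination mul_gammaDensity_add_one ha hb x

theorem gammaDensity_linear_relation {a b : ℝ} (ha : a ≠ 1) (hb : b ≠ 0) (γ₂ : ℝ) {x : ℝ}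
    (hx : 0 < x) :
    γ₂ * (a - 1) / b * gammaDensity a b x
      + (-(γ₂ * (a - 1) / b)) * gammaDensity (a - 1) b x
      + γ₂ * deriv (fun s => gammaDensity (a - 1) s x) b = 0 := by
  rw [deriv_gammaDensity_rate (sub_ne_zero.mpr ha) hb hx, sub_add_cancel]
  ring

theorem not_gammaFirstOrderIdent : ¬ GammaFirstOrderIdent := by
  intro hident
  have hinj : Function.Injective ![((2 : ℝ), (1 : ℝ)), (1, 1)] := by
    intro i j hij
    fin_cases i <;> fin_cases j <;> simp_all
  have hrel := hident 2 ![(2, 1), (1, 1)] (by simp [Fin.forall_fin_two]) hinj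
    ![1, -1] 0 ![0, 1] <| ae_restrict_of_forall_mem measurableSet_Ioi fun x hx => by
      have h := gammaDensity_linear_relation (a := 2) (b := 1) (by norm_num) one_ne_zero 1 hx
      norm_num at h
      simpa [Fin.sum_univ_two, sub_eq_add_neg, add_assoc] using h
  simpa using (hrel 1).2.2

/-- **Proposition 5.1** (key Gamma identity and failure of first-order
identifiability): `∂f/∂b(x|a,b) = (a/b) f(x|a,b) − (a/b) f(x|a+1,b)` for all
`x > 0`; consequently, for any `a > 1`, `b > 0` and `γ₂ ≠ 0`, the coefficients
`α₁ = γ₂(a−1)/b`, `α₂ = −γ₂(a−1)/b` (and `β₁ = β₂ = γ₁ = 0`) produce a vanishing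
linear combination at the two distinct parameter pairs `(a,b)` and `(a−1,b)`,
so the Gamma family is not identifiable in the first order. -/
theorem gamma_identity_and_not_first_order_identifiable :
    (∀ a b : ℝ, 0 < a → 0 < b → ∀ x : ℝ, 0 < x →
      deriv (fun s => gammaDensity a s x) b
        = a / b * gammaDensity a b x - a / b * gammaDensity (a + 1) b x) ∧
    (∀ a b : ℝ, 1 < a → 0 < b → ∀ γ₂ : ℝ, γ₂ ≠ 0 → ∀ x : ℝ, 0 < x →
      γ₂ * (a - 1) / b * gammaDensity a b x
        + (-(γ₂ * (a - 1) / b)) * gammaDensity (a - 1) b x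
        + γ₂ * deriv (fun s => gammaDensity (a - 1) s x) b = 0) ∧
    ¬ GammaFirstOrderIdent :=
  ⟨fun _ _ ha hb _ hx => deriv_gammaDensity_rate ha.ne' hb.ne' hx,
    fun _ _ ha hb γ₂ _ _ hx => gammaDensity_linear_relation ha.ne' hb.ne' γ₂ hx,
    not_gammaFirstOrderIdent⟩
end
end
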